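/- The set function S ↦ tr((∑_{i∈S} bᵢbᵢ')⁻¹) on subsets of {1,…,5} containing {1,2}, with b₁ = 2⁴e₁, b₂ = √(3·2⁹)e₂, b₅ = (1, 2⁶), and b₃, b₄ such that b₃b₃' + b₄b₄' = [[5·2⁹, −3·2⁹], [−3·2⁹, 2¹⁰]], is not supermodular: with S₁ = {1,2}, S₂ = {1,2,5}, Δ = {3,4}, we have f(S₁) − f(S₁∪Δ) < f(S₂) − f(S₂∪Δ). -/
import Mathlib

theorem not_supermodular_example (b : Fin 5 → Fin 2 → ℝ)
    (h1 : b 0 = ![16, 0])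
    (h2 : b 1 = ![0, Real.sqrt (3 * 2 ^ 9)])
    (h34 : Matrix.vecMulVec (b 2) (b 2) + Matrix.vecMulVec (b 3) (b 3)
      = !![2560, -1536; -1536, 1024])
    (h5 : b 4 = ![1, 64]) :
    (fun S : Finset (Fin 5) => ((∑ i ∈ S, Matrix.vecMulVec (b i) (b i))⁻¹).trace) {0, 1}
        - (fun S : Finset (Fin 5) => ((∑ i ∈ S, Matrix.vecMulVec (b i) (b i))⁻¹).trace) {0, 1, 2, 3}
      < (fun S : Finset (Fin 5) => ((∑ i ∈ S, Matrix.vecMulVec (b i) (b i))⁻¹).trace) {0, 1, 4}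
        - (fun S : Finset (Fin 5) => ((∑ i ∈ S, Matrix.vecMulVec (b i) (b i))⁻¹).trace) {0, 1, 2, 3, 4} := by
  have hs : Real.sqrt (3 * 2 ^ 9) * Real.sqrt (3 * 2 ^ 9) = 1536 := by
    rw [Real.mul_self_sqrt (by norm_num : (0:ℝ) ≤ 3 * 2 ^ 9)]
    norm_num
  have M0 : Matrix.vecMulVec (b 0) (b 0) = !![256, 0; 0, 0] := by
    ext i j
    fin_cases i <;> fin_cases j <;> simp [Matrix.vecMulVec_apply, h1] <;> norm_num
  have M1 : Matrix.vecMulVec (b 1) (b 1) = !![0, 0; 0, 1536] := by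
    ext i j
    fin_cases i <;> fin_cases j <;> simp [Matrix.vecMulVec_apply, h2] <;>
      nlinarith [Real.mul_self_sqrt (show (0:ℝ) ≤ 3 by norm_num),
        Real.mul_self_sqrt (show (0:ℝ) ≤ 2 ^ 9 by norm_num),
        Real.sqrt_nonneg (3:ℝ), Real.sqrt_nonneg ((2:ℝ) ^ 9)]
  have M4 : Matrix.vecMulVec (b 4) (b 4) = !![1, 64; 64, 4096] := by
    ext i j
    fin_cases i <;> fin_cases j <;> simp [Matrix.vecMulVec_apply, h5] <;> norm_num
  have hS1 : ∑ i ∈ ({0, 1} : Finset (Fin 5)), Matrix.vecMulVec (b i) (b i)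
      = !![256, 0; 0, 1536] := by
    rw [Finset.sum_pair (by decide), M0, M1]
    ext i j
    fin_cases i <;> fin_cases j <;> norm_num
  have hS13 : ∑ i ∈ ({0, 1, 2, 3} : Finset (Fin 5)), Matrix.vecMulVec (b i) (b i)
      = !![2816, -1536; -1536, 2560] := by
    rw [show ({0, 1, 2, 3} : Finset (Fin 5)) = insert 0 (insert 1 {2, 3}) from rfl,
      Finset.sum_insert (by decide), Finset.sum_insert (by decide),
      Finset.sum_pair (by decide), M0, M1, h34]
    ext i j
    fin_cases i <;> fin_cases j <;> norm_num
  have hS2 : ∑ i ∈ ({0, 1, 4} : Finset (Fin 5)), Matrix.vecMulVec (b i) (b i)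
      = !![257, 64; 64, 5632] := by
    rw [show ({0, 1, 4} : Finset (Fin 5)) = insert 0 {1, 4} from rfl,
      Finset.sum_insert (by decide), Finset.sum_pair (by decide), M0, M1, M4]
    ext i j
    fin_cases i <;> fin_cases j <;> norm_num
  have hS24 : ∑ i ∈ ({0, 1, 2, 3, 4} : Finset (Fin 5)), Matrix.vecMulVec (b i) (b i)
      = !![2817, -1472; -1472, 6656] := by
    rw [show ({0, 1, 2, 3, 4} : Finset (Fin 5)) = insert 0 (insert 1 (insert 2 {3, 4})) from rfl,
      Finset.sum_insert (by decide), Finset.sum_insert (by decide),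
      Finset.sum_insert (by decide), Finset.sum_pair (by decide),
      M0, M1, M4, show Matrix.vecMulVec (b 2) (b 2) + (Matrix.vecMulVec (b 3) (b 3)
        + !![1, 64; 64, 4096]) = !![2560, -1536; -1536, 1024] + !![1, 64; 64, 4096] by
          rw [← add_assoc, h34]]
    ext i j
    fin_cases i <;> fin_cases j <;> norm_num
  have inv1 : (!![256, 0; 0, 1536] : Matrix (Fin 2) (Fin 2) ℝ)⁻¹
      = !![1/256, 0; 0, 1/1536] := by
    apply Matrix.inv_eq_right_inv
    ext i j
    fin_cases i <;> fin_cases j <;>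
      simp [Matrix.mul_apply, Fin.sum_univ_two, Matrix.one_apply] <;> norm_num
  have inv2 : (!![2816, -1536; -1536, 2560] : Matrix (Fin 2) (Fin 2) ℝ)⁻¹
      = !![2560/4849664, 1536/4849664; 1536/4849664, 2816/4849664] := by
    apply Matrix.inv_eq_right_inv
    ext i j
    fin_cases i <;> fin_cases j <;>
      simp [Matrix.mul_apply, Fin.sum_univ_two, Matrix.one_apply] <;> norm_num
  have inv3 : (!![257, 64; 64, 5632] : Matrix (Fin 2) (Fin 2) ℝ)⁻¹
      = !![5632/1443328, -64/1443328; -64/1443328, 257/1443328] := by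
    apply Matrix.inv_eq_right_inv
    ext i j
    fin_cases i <;> fin_cases j <;>
      simp [Matrix.mul_apply, Fin.sum_univ_two, Matrix.one_apply] <;> norm_num
  have inv4 : (!![2817, -1472; -1472, 6656] : Matrix (Fin 2) (Fin 2) ℝ)⁻¹
      = !![6656/16583168, 1472/16583168; 1472/16583168, 2817/16583168] := by
    apply Matrix.inv_eq_right_inv
    ext i j
    fin_cases i <;> fin_cases j <;>
      simp [Matrix.mul_apply, Fin.sum_univ_two, Matrix.one_apply] <;> norm_num
  simp only [hS1, hS13, hS2, hS24, inv1, inv2, inv3, inv4, Matrix.trace_fin_two_of]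
  norm_num
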